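/- arXiv:2405.03540 — 2 statements merged into one kernel-verified Lean document; each statement's English description precedes it below -/
import Mathlib

section
/- As G tends to infinity, for each residue r in {4, 6, 0}, the ratio U_r(G) / U_2(G) tends to 1; that is, in base 8 all four residue classes of gaps have equal asymptotic relative populations. -/
open Filter

/-- The asymptotic relative population of the even gap `g`:
`W(g) = ∏_{q odd prime, q ∣ g} (q-1)/(q-2)`. -/
noncomputable def W (g : ℕ) : ℝ :=
  ∏ q ∈ g.primeFactors.filter (fun q => q ≠ 2), (((q : ℝ) - 1) / ((q : ℝ) - 2))

noncomputable def hf (d : ℕ) : ℝ :=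
  if Squarefree d ∧ Odd d then ∏ q ∈ d.primeFactors, (1 / ((q : ℝ) - 2)) else 0

lemma three_le_of_mem {d q : ℕ} (hd : Odd d) (hq : q ∈ d.primeFactors) : 3 ≤ q := by
  have hp := Nat.prime_of_mem_primeFactors hq
  have hdvd := Nat.dvd_of_mem_primeFactors hq
  have : q ≠ 2 := by
    rintro rfl
    rw [Nat.odd_iff] at hd
    omega
  have := hp.two_le
  omega

lemma hf_nonneg (d : ℕ) : 0 ≤ hf d := by
  unfold hf
  split
  · rename_i hP
    apply Finset.prod_nonneg
    intro q hq
    have := three_le_of_mem hP.2 hq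
    have h3 : (3:ℝ) ≤ q := by exact_mod_cast this
    have h2 : (0:ℝ) < (q:ℝ) - 2 := by linarith
    positivity
  · exact le_refl 0

lemma hf_one : hf 1 = 1 := by
  simp [hf]

lemma W_eq_sum {g : ℕ} (hg : g ≠ 0) : W g = ∑ d ∈ g.divisors, hf d := by
  set m := ordCompl[2] g with hm
  have hm0 : m ≠ 0 := (Nat.ordCompl_pos 2 hg).ne'
  have hm2 : ¬ 2 ∣ m := Nat.not_dvd_ordCompl Nat.prime_two hg
  have hPF : m.primeFactors = g.primeFactors.erase 2 := by
    rw [← Nat.support_factorization, hm, Nat.factorization_ordCompl,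
      Finsupp.support_erase, Nat.support_factorization]
  have step1 : ∑ d ∈ g.divisors, hf d
      = ∑ d ∈ m.divisors.filter Squarefree, ∏ q ∈ d.primeFactors, (1 / ((q : ℝ) - 2)) := by
    rw [show (∑ d ∈ g.divisors, hf d)
        = ∑ d ∈ g.divisors.filter (fun d => Squarefree d ∧ Odd d),
            ∏ q ∈ d.primeFactors, (1 / ((q : ℝ) - 2)) from by
      rw [Finset.sum_filter]
      exact Finset.sum_congr rfl fun d _ => rfl]
    apply Finset.sum_congr
    · ext d
      simp only [Finset.mem_filter, Nat.mem_divisors]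
      constructor
      · rintro ⟨⟨hdg, -⟩, hsf, hodd⟩
        refine ⟨⟨?_, hm0⟩, hsf⟩
        exact Nat.dvd_ordCompl_of_dvd_not_dvd hdg (by rw [Nat.two_dvd_ne_zero]; exact Nat.odd_iff.mp hodd)
      · rintro ⟨⟨hdm, -⟩, hsf⟩
        have hdg : d ∣ g := hdm.trans (Nat.ordCompl_dvd g 2)
        refine ⟨⟨hdg, hg⟩, hsf, ?_⟩
        rw [Nat.odd_iff, ← Nat.two_dvd_ne_zero]
        exact fun h2d => hm2 (h2d.trans hdm)
    · intro d hd
      rfl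
  rw [step1, Nat.sum_divisors_filter_squarefree hm0]
  have hnf : (UniqueFactorizationMonoid.normalizedFactors m).toFinset = m.primeFactors := by
    rw [Nat.factors_eq]
    rfl
  rw [hnf, hPF]
  have hP : g.primeFactors.filter (fun q => q ≠ 2) = g.primeFactors.erase 2 :=
    Finset.filter_ne' _ _
  unfold W
  rw [hP]
  set P := g.primeFactors.erase 2 with hPdef
  have hprime : ∀ q ∈ P, q.Prime := fun q hq =>
    Nat.prime_of_mem_primeFactors (Finset.mem_of_mem_erase hq)
  have hq3 : ∀ q ∈ P, 3 ≤ q := by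
    intro q hq
    have := (hprime q hq).two_le
    have := Finset.ne_of_mem_erase hq
    omega
  have hWform : ∀ q ∈ P, ((q : ℝ) - 1) / ((q : ℝ) - 2) = 1 / ((q:ℝ) - 2) + 1 := by
    intro q hq
    have h3 : (3:ℝ) ≤ q := by exact_mod_cast hq3 q hq
    have hne : (q:ℝ) - 2 ≠ 0 := by linarith
    field_simp
    ring
  rw [Finset.prod_congr rfl hWform, Finset.prod_add]
  apply Finset.sum_congr rfl
  intro t ht
  rw [Finset.mem_powerset] at ht
  have htp : ∀ q ∈ t, q.Prime := fun q hq => hprime q (ht hq)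
  have hprod : (t.val.prod).primeFactors = t := by
    have : t.val.prod = ∏ q ∈ t, q := by
      rw [Finset.prod_eq_multiset_prod, Multiset.map_id']
    rw [this, Nat.primeFactors_prod htp]
  rw [hprod, Finset.prod_const_one, mul_one]

lemma card_mod_bounds (N q r₀ : ℕ) (hq : 0 < q) (hr : r₀ < q) :
    |((((Finset.Icc 1 N).filter (fun g => g % q = r₀)).card : ℝ)) - (N : ℝ) / q| ≤ 2 := by
  set A := (Finset.Icc 1 N).filter (fun g => g % q = r₀) with hA
  have hub : A.card ≤ N / q + 1 := by
    have hmaps : ∀ g ∈ A, g / q ∈ Finset.range (N / q + 1) := by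
      intro g hg
      rw [hA, Finset.mem_filter, Finset.mem_Icc] at hg
      rw [Finset.mem_range, Nat.lt_succ_iff]
      exact Nat.div_le_div_right hg.1.2
    have hinj : Set.InjOn (· / q) A := by
      intro a ha b hb hab
      rw [Finset.mem_coe, hA, Finset.mem_filter] at ha hb
      have h1 := Nat.div_add_mod a q
      have h2 := Nat.div_add_mod b q
      simp only at hab
      rw [← h1, ← h2, hab, ha.2, hb.2]
    simpa using Finset.card_le_card_of_injOn _ hmaps hinj
  have hlb : N / q ≤ A.card + 1 := by
    have hmaps : ∀ t ∈ Finset.range (N / q), q * t + r₀ ∈ A ∪ {0} := by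
      intro t ht
      rw [Finset.mem_range] at ht
      rcases Nat.eq_zero_or_pos (q * t + r₀) with h0 | hpos
      · exact Finset.mem_union_right _ (by simp [h0])
      · apply Finset.mem_union_left
        rw [hA, Finset.mem_filter, Finset.mem_Icc]
        have hle : q * t + r₀ ≤ N := by
          have h1 : q * (t + 1) ≤ q * (N / q) := Nat.mul_le_mul_left q ht
          have h2 : q * (N / q) ≤ N := Nat.mul_div_le N q
          have : q * t + r₀ < q * (t + 1) := by
            rw [Nat.mul_succ]; omega
          omega
        refine ⟨⟨hpos, hle⟩, ?_⟩
        rw [Nat.mul_add_mod, Nat.mod_eq_of_lt hr]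
    have hinj : Set.InjOn (fun t => q * t + r₀) (Finset.range (N / q)) := by
      intro a _ b _ hab
      simp only at hab
      have : q * a = q * b := by omega
      exact Nat.eq_of_mul_eq_mul_left hq this
    have := Finset.card_le_card_of_injOn _ hmaps hinj
    have hcu : (A ∪ {0}).card ≤ A.card + 1 := by
      refine (Finset.card_union_le _ _).trans ?_
      simp
    simpa using this.trans hcu
  have hq' : (0:ℝ) < q := by exact_mod_cast hq
  have h1 : ((N / q : ℕ) : ℝ) ≤ (N : ℝ) / q := Nat.cast_div_le
  have h2 : (N : ℝ) / q < ((N / q : ℕ) : ℝ) + 1 := by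
    rw [div_lt_iff₀ hq']
    have h3 : N < q * (N / q) + q := by
      have := Nat.div_add_mod N q
      have := Nat.mod_lt N hq
      omega
    calc (N:ℝ) < ((q * (N/q) + q : ℕ) : ℝ) := by exact_mod_cast h3
    _ = (((N/q : ℕ):ℝ) + 1) * q := by push_cast; ring
  have hubR : (A.card : ℝ) ≤ (N:ℝ)/q + 1 := by
    have : (A.card : ℝ) ≤ ((N/q : ℕ) : ℝ) + 1 := by exact_mod_cast hub
    linarith
  have hlbR : (N:ℝ)/q - 2 ≤ (A.card : ℝ) := by
    have : ((N/q : ℕ) : ℝ) ≤ (A.card : ℝ) + 1 := by exact_mod_cast hlb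
    linarith
  rw [abs_le]
  constructor <;> linarith

lemma exists_r0 {d : ℕ} (r : ℕ) (hr : r < 8) (hd : Odd d) :
    ∃ r₀ < 8 * d, ∀ g : ℕ, (g % 8 = r ∧ d ∣ g) ↔ g % (8 * d) = r₀ := by
  have hd0 : 0 < d := hd.pos
  have cop : Nat.Coprime 8 d := by
    have h2 : Nat.Coprime 2 d := Nat.coprime_two_left.mpr hd
    have h8 := Nat.Coprime.pow_left 3 h2
    norm_num at h8
    exact h8
  obtain ⟨k, hk8, hkd⟩ := Nat.chineseRemainder cop r 0
  refine ⟨k % (8 * d), Nat.mod_lt _ (by positivity), fun g => ?_⟩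
  constructor
  · rintro ⟨hg8, hgd⟩
    have e8 : g ≡ k [MOD 8] := by
      unfold Nat.ModEq
      rw [hg8, hk8, Nat.mod_eq_of_lt hr]
    have ed : g ≡ k [MOD d] := by
      unfold Nat.ModEq
      rw [hkd, Nat.zero_mod]
      obtain ⟨c, rfl⟩ := hgd
      simp [Nat.mul_mod_right]
    have := (Nat.modEq_and_modEq_iff_modEq_mul cop).1 ⟨e8, ed⟩
    exact this
  · intro hg
    have hmod : g ≡ k [MOD 8 * d] := hg
    have h8' : g ≡ k [MOD 8] := Nat.ModEq.of_mul_right d hmod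
    have hd' : g ≡ k [MOD d] := Nat.ModEq.of_mul_left 8 hmod
    constructor
    · have : g % 8 = k % 8 := h8'
      rw [this, hk8, Nat.mod_eq_of_lt hr]
    · apply Nat.dvd_of_mod_eq_zero
      have : g % d = k % d := hd'
      rw [this, hkd, Nat.zero_mod]

lemma sqrt_prod_nat (s : Finset ℕ) : Real.sqrt (∏ q ∈ s, (q:ℝ)) = ∏ q ∈ s, Real.sqrt q := by
  induction s using Finset.cons_induction with
  | empty => simp
  | cons a s ha ih =>
    rw [Finset.prod_cons, Finset.prod_cons, Real.sqrt_mul (by positivity), ih]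

lemma hf_le {d : ℕ} (hd : 1 ≤ d) : hf d ≤ 2 / Real.sqrt d := by
  have hds : (0:ℝ) < Real.sqrt d := Real.sqrt_pos.mpr (by exact_mod_cast hd)
  by_cases hP : Squarefree d ∧ Odd d
  · rw [hf, if_pos hP]
    have hq3 : ∀ q ∈ d.primeFactors, 3 ≤ q := fun q hq => three_le_of_mem hP.2 hq
    have hqp : ∀ q ∈ d.primeFactors, q.Prime := fun q hq => Nat.prime_of_mem_primeFactors hq
    rw [le_div_iff₀ hds]
    have hsd : Real.sqrt d = ∏ q ∈ d.primeFactors, Real.sqrt q := by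
      conv_lhs => rw [← Nat.prod_primeFactors_of_squarefree hP.1]
      rw [Nat.cast_prod, sqrt_prod_nat]
    rw [hsd, ← Finset.prod_mul_distrib]
    have hstep : ∀ q ∈ d.primeFactors,
        1 / ((q:ℝ) - 2) * Real.sqrt q ≤ (if q = 3 then Real.sqrt 3 else 1) := by
      intro q hq
      have h3 : (3:ℝ) ≤ (q:ℝ) := by exact_mod_cast hq3 q hq
      have hpos : (0:ℝ) < (q:ℝ) - 2 := by linarith
      by_cases hq3' : q = 3
      · subst hq3'
        simp
        norm_num
      · have h5 : 5 ≤ q := by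
          have := (hqp q hq).two_le
          have h3' := hq3 q hq
          have : q ≠ 4 := by
            rintro rfl
            exact absurd (hqp 4 hq) (by norm_num)
          omega
        rw [if_neg hq3']
        have h5R : (5:ℝ) ≤ (q:ℝ) := by exact_mod_cast h5
        have hsq : Real.sqrt q ≤ (q:ℝ) - 2 := by
          have hle : (q:ℝ) ≤ ((q:ℝ) - 2)^2 := by nlinarith
          calc Real.sqrt q ≤ Real.sqrt (((q:ℝ) - 2)^2) := Real.sqrt_le_sqrt hle
          _ = (q:ℝ) - 2 := Real.sqrt_sq (by linarith)
        rw [one_div, mul_comm, ← div_eq_mul_inv, div_le_one hpos]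
        exact hsq
    calc (∏ q ∈ d.primeFactors, 1 / ((q:ℝ) - 2) * Real.sqrt q)
        ≤ ∏ q ∈ d.primeFactors, (if q = 3 then Real.sqrt 3 else 1) := by
          apply Finset.prod_le_prod
          · intro q hq
            have h3 : (3:ℝ) ≤ (q:ℝ) := by exact_mod_cast hq3 q hq
            have hpos : (0:ℝ) < (q:ℝ) - 2 := by linarith
            positivity
          · exact hstep
    _ ≤ 2 := by
        rw [Finset.prod_ite_eq' d.primeFactors 3 (fun _ => Real.sqrt 3)]
        have hs3 : Real.sqrt 3 ≤ 2 := by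
          rw [show (2:ℝ) = Real.sqrt 4 by
            rw [show (4:ℝ) = 2^2 by norm_num, Real.sqrt_sq (by norm_num)]]
          exact Real.sqrt_le_sqrt (by norm_num)
        split <;> [exact hs3; norm_num]
  · rw [hf, if_neg hP]
    positivity

lemma sum_inv_sqrt (N : ℕ) :
    ∑ d ∈ Finset.Icc 1 N, 1 / Real.sqrt d ≤ 2 * Real.sqrt N := by
  have key : ∀ i : ℕ, 1 / Real.sqrt (i+1) ≤ 2 * Real.sqrt (i+1) - 2 * Real.sqrt i := by
    intro i
    set a := Real.sqrt ((i:ℝ)+1) with hadef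
    set b := Real.sqrt (i:ℝ) with hbdef
    have ha : a^2 = (i:ℝ)+1 := Real.sq_sqrt (by positivity)
    have hb : b^2 = (i:ℝ) := Real.sq_sqrt (by positivity)
    have ha0 : 0 < a := Real.sqrt_pos.mpr (by positivity)
    have hb0 : 0 ≤ b := Real.sqrt_nonneg _
    rw [div_le_iff₀ ha0]
    nlinarith [sq_nonneg (a - b)]
  have hIcc : ∑ d ∈ Finset.Icc 1 N, 1 / Real.sqrt d
      = ∑ i ∈ Finset.range N, 1 / Real.sqrt ((i:ℝ)+1) := by
    rw [← Finset.Ico_add_one_right_eq_Icc, Finset.sum_Ico_eq_sum_range]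
    norm_num
    apply Finset.sum_congr rfl
    intro i _
    push_cast
    ring_nf
  rw [hIcc]
  have htel : ∑ i ∈ Finset.range N,
      (2 * Real.sqrt ((i:ℝ)+1) - 2 * Real.sqrt i) = 2 * Real.sqrt N - 2 * Real.sqrt 0 := by
    have := Finset.sum_range_sub (f := fun i : ℕ => 2 * Real.sqrt i) N
    simpa using this
  calc ∑ i ∈ Finset.range N, 1 / Real.sqrt ((i:ℝ)+1)
      ≤ ∑ i ∈ Finset.range N, (2 * Real.sqrt ((i:ℝ)+1) - 2 * Real.sqrt i) :=
        Finset.sum_le_sum (fun i _ => key i)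
  _ = 2 * Real.sqrt N - 2 * Real.sqrt 0 := htel
  _ ≤ 2 * Real.sqrt N := by simp

lemma summable_hf : Summable (fun d : ℕ => hf d / d) := by
  have hsum : Summable (fun d : ℕ => 2 * ((d:ℝ) ^ ((3:ℝ)/2))⁻¹) := by
    apply Summable.mul_left
    rw [Real.summable_nat_rpow_inv]
    norm_num
  apply Summable.of_nonneg_of_le _ _ hsum
  · intro d
    exact div_nonneg (hf_nonneg d) (by positivity)
  · intro d
    rcases Nat.eq_zero_or_pos d with rfl | hd
    · simp
    · have hd0 : (0:ℝ) < d := by exact_mod_cast hd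
      have hds : (0:ℝ) < Real.sqrt d := Real.sqrt_pos.mpr hd0
      have h1 : hf d / d ≤ (2 / Real.sqrt d) / d := by
        gcongr
        exact hf_le hd
      have h2 : (2 / Real.sqrt d) / d = 2 * ((d:ℝ) ^ ((3:ℝ)/2))⁻¹ := by
        have hrp : (d:ℝ) ^ ((3:ℝ)/2) = Real.sqrt d * d := by
          rw [show (3:ℝ)/2 = 1/2 + 1 by norm_num, Real.rpow_add hd0, Real.rpow_one,
            ← Real.sqrt_eq_rpow]
        rw [hrp, div_div, mul_comm (Real.sqrt (d:ℝ)) (d:ℝ), ← div_eq_mul_inv]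
      linarith [h1, h2.le]

noncomputable def C0 : ℝ := ∑' d : ℕ, hf d / d

lemma C0_ge_one : 1 ≤ C0 := by
  have h1 : hf 1 / (1:ℕ) = 1 := by rw [hf_one]; norm_num
  have := Summable.le_tsum summable_hf 1 (fun i _ => div_nonneg (hf_nonneg i) (by positivity))
  rw [h1] at this
  exact this

noncomputable def Sf (r N : ℕ) : ℝ :=
  ∑ g ∈ (Finset.Icc 1 N).filter (fun g => Even g ∧ g % 8 = r), W g

lemma Sf_swap (r : ℕ) (hre : r % 2 = 0) (N : ℕ) :
    Sf r N = ∑ d ∈ Finset.Icc 1 N,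
      hf d * (((Finset.Icc 1 N).filter (fun g => g % 8 = r ∧ d ∣ g)).card : ℝ) := by
  unfold Sf
  have hfe : (Finset.Icc 1 N).filter (fun g => Even g ∧ g % 8 = r)
      = (Finset.Icc 1 N).filter (fun g => g % 8 = r) := by
    apply Finset.filter_congr
    intro g _
    simp only [Nat.even_iff]
    constructor
    · rintro ⟨-, hh⟩; exact hh
    · intro hh; exact ⟨by omega, hh⟩
  rw [hfe]
  have hW : ∀ g ∈ (Finset.Icc 1 N).filter (fun g => g % 8 = r), W g = ∑ d ∈ g.divisors, hf d := by
    intro g hg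
    rw [Finset.mem_filter, Finset.mem_Icc] at hg
    exact W_eq_sum (by omega)
  rw [Finset.sum_congr rfl hW]
  rw [Finset.sum_comm'
    (s := (Finset.Icc 1 N).filter (fun g => g % 8 = r))
    (t := fun g => g.divisors)
    (t' := Finset.Icc 1 N)
    (s' := fun d => (Finset.Icc 1 N).filter (fun g => g % 8 = r ∧ d ∣ g))
    (f := fun _ d => hf d) ?_]
  · apply Finset.sum_congr rfl
    intro d _
    rw [Finset.sum_const, nsmul_eq_mul, mul_comm]
  · intro g d
    simp only [Finset.mem_filter, Finset.mem_Icc, Nat.mem_divisors]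
    constructor
    · rintro ⟨⟨⟨hg1, hgN⟩, hr8⟩, hdg, hg0⟩
      have hd1 : 1 ≤ d := Nat.pos_of_dvd_of_pos hdg (by omega)
      have hdN : d ≤ N := (Nat.le_of_dvd (by omega) hdg).trans hgN
      exact ⟨⟨⟨hg1, hgN⟩, hr8, hdg⟩, hd1, hdN⟩
    · rintro ⟨⟨⟨hg1, hgN⟩, hr8, hdg⟩, -, -⟩
      exact ⟨⟨⟨hg1, hgN⟩, hr8⟩, hdg, by omega⟩

lemma Sf_est (r : ℕ) (hr8 : r < 8) (hre : r % 2 = 0) (N : ℕ) :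
    |Sf r N - (N:ℝ)/8 * ∑ d ∈ Finset.Icc 1 N, hf d / d| ≤ 8 * Real.sqrt N := by
  rw [Sf_swap r hre N, Finset.mul_sum, ← Finset.sum_sub_distrib]
  refine (Finset.abs_sum_le_sum_abs _ _).trans ?_
  have hterm : ∀ d ∈ Finset.Icc 1 N,
      |hf d * (((Finset.Icc 1 N).filter (fun g => g % 8 = r ∧ d ∣ g)).card : ℝ)
        - (N:ℝ)/8 * (hf d / d)| ≤ 2 * (2 / Real.sqrt d) := by
    intro d hd
    rw [Finset.mem_Icc] at hd
    have hd1 : 1 ≤ d := hd.1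
    have hdR : (0:ℝ) < d := by exact_mod_cast hd1
    by_cases hh : hf d = 0
    · simp only [hh, zero_mul, mul_zero, zero_div, sub_zero, abs_zero]
      have : (0:ℝ) < Real.sqrt d := Real.sqrt_pos.mpr hdR
      positivity
    · have hP : Squarefree d ∧ Odd d := by
        by_contra hc
        exact hh (by rw [hf, if_neg hc])
      obtain ⟨r₀, hr₀, hiff⟩ := exists_r0 r hr8 hP.2
      have hfilter : (Finset.Icc 1 N).filter (fun g => g % 8 = r ∧ d ∣ g)
          = (Finset.Icc 1 N).filter (fun g => g % (8 * d) = r₀) := by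
        apply Finset.filter_congr
        intro g _
        exact hiff g
      have hcount := card_mod_bounds N (8 * d) r₀ (by positivity) hr₀
      have hcast : ((8 * d : ℕ) : ℝ) = 8 * (d:ℝ) := by push_cast; ring
      rw [hcast] at hcount
      have heq : hf d * (((Finset.Icc 1 N).filter (fun g => g % 8 = r ∧ d ∣ g)).card : ℝ)
          - (N:ℝ)/8 * (hf d / d)
          = hf d * ((((Finset.Icc 1 N).filter (fun g => g % (8*d) = r₀)).card : ℝ)
              - (N:ℝ) / (8 * d)) := by
        rw [hfilter]
        field_simp
      rw [heq, abs_mul, abs_of_nonneg (hf_nonneg d)]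
      calc hf d * |(((Finset.Icc 1 N).filter (fun g => g % (8*d) = r₀)).card : ℝ)
              - (N:ℝ) / (8 * d)|
          ≤ (2 / Real.sqrt d) * 2 := by
            apply mul_le_mul (hf_le hd1) hcount (abs_nonneg _)
            have : (0:ℝ) < Real.sqrt d := Real.sqrt_pos.mpr hdR
            positivity
        _ = 2 * (2 / Real.sqrt d) := by ring
  refine (Finset.sum_le_sum hterm).trans ?_
  have : ∑ d ∈ Finset.Icc 1 N, 2 * (2 / Real.sqrt d)
      = 4 * ∑ d ∈ Finset.Icc 1 N, 1 / Real.sqrt d := by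
    rw [Finset.mul_sum]
    apply Finset.sum_congr rfl
    intro d _
    ring
  rw [this]
  have := sum_inv_sqrt N
  linarith

lemma tendsto_partial :
    Tendsto (fun N : ℕ => ∑ d ∈ Finset.Icc 1 N, hf d / d) atTop (nhds C0) := by
  have h0 : Tendsto (fun N : ℕ => ∑ d ∈ Finset.range N, hf d / d) atTop (nhds C0) :=
    summable_hf.hasSum.tendsto_sum_nat
  have h1 := h0.comp (tendsto_add_atTop_nat 1)
  have heq : ∀ N : ℕ, ∑ d ∈ Finset.range (N + 1), hf d / d
      = ∑ d ∈ Finset.Icc 1 N, hf d / d := by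
    intro N
    rw [Finset.sum_range_succ']
    simp only [Nat.cast_zero, div_zero, add_zero]
    rw [← Finset.Ico_add_one_right_eq_Icc, Finset.sum_Ico_eq_sum_range]
    norm_num
    apply Finset.sum_congr rfl
    intro i _
    rw [add_comm 1 i]
    push_cast
    ring_nf
  have : (fun N : ℕ => ∑ d ∈ Finset.range (N + 1), hf d / d)
      = fun N : ℕ => ∑ d ∈ Finset.Icc 1 N, hf d / d := funext heq
  rw [← this]
  exact h1

lemma tendsto_sqrt_nat : Tendsto (fun N : ℕ => Real.sqrt N) atTop atTop := by
  apply Filter.tendsto_atTop_atTop.2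
  intro b
  refine ⟨⌈b^2⌉₊, fun N hN => ?_⟩
  rcases le_or_gt b 0 with hb | hb
  · exact hb.trans (Real.sqrt_nonneg _)
  · have h1 : b^2 ≤ (N:ℝ) := le_trans (Nat.le_ceil _) (by exact_mod_cast hN)
    calc b = Real.sqrt (b^2) := (Real.sqrt_sq hb.le).symm
    _ ≤ Real.sqrt N := Real.sqrt_le_sqrt h1

lemma Sf_tendsto (r : ℕ) (hr8 : r < 8) (hre : r % 2 = 0) :
    Tendsto (fun N : ℕ => Sf r N / N) atTop (nhds (C0 / 8)) := by
  have hmain : Tendsto (fun N : ℕ => (∑ d ∈ Finset.Icc 1 N, hf d / d) / 8) atTop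
      (nhds (C0 / 8)) := tendsto_partial.div_const 8
  have herr : Tendsto
      (fun N : ℕ => Sf r N / N - (∑ d ∈ Finset.Icc 1 N, hf d / d) / 8) atTop (nhds 0) := by
    apply squeeze_zero_norm' (a := fun N : ℕ => 8 / Real.sqrt N)
    · filter_upwards [eventually_ge_atTop 1] with N hN
      have hN0 : (0:ℝ) < N := by exact_mod_cast hN
      have hsN : (0:ℝ) < Real.sqrt N := Real.sqrt_pos.mpr hN0
      have hest := Sf_est r hr8 hre N
      have heq : Sf r N / N - (∑ d ∈ Finset.Icc 1 N, hf d / d) / 8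
          = (Sf r N - (N:ℝ)/8 * ∑ d ∈ Finset.Icc 1 N, hf d / d) / N := by
        have h2 : ((N:ℝ)/8 * ∑ d ∈ Finset.Icc 1 N, hf d / d)/N
            = (∑ d ∈ Finset.Icc 1 N, hf d / d)/8 := by
          rw [div_eq_div_iff hN0.ne' (by norm_num : (8:ℝ) ≠ 0)]
          ring
        rw [sub_div, h2]
      rw [Real.norm_eq_abs, heq, abs_div, abs_of_pos hN0]
      rw [div_le_div_iff₀ hN0 hsN]
      have hNs : Real.sqrt N * Real.sqrt N = (N:ℝ) := Real.mul_self_sqrt hN0.le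
      calc |Sf r N - (N:ℝ)/8 * ∑ d ∈ Finset.Icc 1 N, hf d / d| * Real.sqrt N
          ≤ (8 * Real.sqrt N) * Real.sqrt N := by
            apply mul_le_mul_of_nonneg_right hest hsN.le
        _ = 8 * (N:ℝ) := by rw [mul_assoc, hNs]
    · exact Filter.Tendsto.div_atTop tendsto_const_nhds tendsto_sqrt_nat
  have hfun : (fun N : ℕ => Sf r N / N)
      = fun N : ℕ => (∑ d ∈ Finset.Icc 1 N, hf d / d) / 8
          + (Sf r N / N - (∑ d ∈ Finset.Icc 1 N, hf d / d) / 8) := by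
    funext N; ring
  rw [hfun]
  simpa using hmain.add herr

/-- The sum of `W(g)` over even integers `g` with `0 < g ≤ G` and `g ≡ r (mod 8)`. -/
noncomputable def U (r : ℕ) (G : ℝ) : ℝ :=
  ∑ g ∈ (Finset.Icc 1 ⌊G⌋₊).filter (fun g => Even g ∧ g % 8 = r), W g
/-- In base 8, as `G → ∞`, for each residue `r ∈ {4, 6, 0}`,
the ratio `U_r(G)/U_2(G)` tends to `1`. -/
theorem base_eight_team_ratios_tendsto_one (r : ℕ) (hr : r ∈ ({4, 6, 0} : Finset ℕ)) :
    Tendsto (fun G : ℝ => U r G / U 2 G) atTop (nhds 1) := by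
  have hr' : r = 4 ∨ r = 6 ∨ r = 0 := by
    simpa using hr
  have hr8 : r < 8 := by rcases hr' with rfl | rfl | rfl <;> norm_num
  have hre : r % 2 = 0 := by rcases hr' with rfl | rfl | rfl <;> norm_num
  have h2 := Sf_tendsto 2 (by norm_num) (by norm_num)
  have hrT := Sf_tendsto r hr8 hre
  have hC : C0 / 8 ≠ 0 := by
    have := C0_ge_one
    positivity
  have hdiv := hrT.div h2 hC
  rw [div_self hC] at hdiv
  have heq : (fun N : ℕ => (Sf r N / N) / (Sf 2 N / N))
      =ᶠ[atTop] fun N : ℕ => Sf r N / Sf 2 N := by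
    filter_upwards [eventually_ge_atTop 1] with N hN
    have hN0 : ((N:ℝ)) ≠ 0 := by
      have : (0:ℝ) < N := by exact_mod_cast hN
      exact this.ne'
    rw [div_div_div_comm, div_self hN0, div_one]
  have hNat : Tendsto (fun N : ℕ => Sf r N / Sf 2 N) atTop (nhds 1) := hdiv.congr' heq
  have hfloor : Tendsto (fun G : ℝ => (⌊G⌋₊ : ℕ)) atTop atTop := tendsto_nat_floor_atTop
  exact hNat.comp hfloor
end

section
/- As G tends to infinity, the ratio V_0(G) / V_2(G) tends to 8/3; that is, in base 30 the asymptotic relative population of the residue class r = 0 mod 30 is 8/3 times that of r = 2 mod 30, matching the eight ordered pairs of last digits base 30 assigned to r = 0 versus three for the class r = 2. -/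
open Filter

/-- The sum of `W(g)` over even integers `g` with `0 < g ≤ G` and `g ≡ r (mod 30)`. -/
noncomputable def V (r : ℕ) (G : ℝ) : ℝ :=
  ∑ g ∈ (Finset.Icc 1 ⌊G⌋₊).filter (fun g => Even g ∧ g % 30 = r), W g

/-! ### Auxiliary definitions -/

open Finset in
/-- The part of `W` coming from primes other than `2, 3, 5`. -/
noncomputable def F30 (g : ℕ) : ℝ :=
  ∏ q ∈ g.primeFactors.filter (fun q => ¬(q = 2 ∨ q = 3 ∨ q = 5)),
    (((q : ℝ) - 1) / ((q : ℝ) - 2))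

/-- The multiplicative weight `f(d) = ∏_{q ∣ d} 1/(q-2)`. -/
noncomputable def f30 (d : ℕ) : ℝ := ∏ q ∈ d.primeFactors, ((q : ℝ) - 2)⁻¹

/-- The finset of gaps. -/
def Agaps (r n : ℕ) : Finset ℕ := (Finset.Icc 1 n).filter (fun g => Even g ∧ g % 30 = r)

/-- The finset of squarefree `d ≤ n` coprime to `30`. -/
def Dset (n : ℕ) : Finset ℕ := (Finset.Icc 1 n).filter (fun d => Squarefree d ∧ d.Coprime 30)

lemma prime_seven_le {q : ℕ} (hq : q.Prime) (h2 : q ≠ 2) (h3 : q ≠ 3) (h5 : q ≠ 5) : 7 ≤ q := by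
  by_contra h
  interval_cases q <;> simp_all (config := {decide := true})

lemma W_eq_of_mod_zero {g : ℕ} (hg0 : g ≠ 0) (hg : g % 30 = 0) : W g = 8 / 3 * F30 g := by
  have h30 : (30 : ℕ) ∣ g := Nat.dvd_of_mod_eq_zero hg
  have h3 : 3 ∈ g.primeFactors :=
    Nat.mem_primeFactors.2 ⟨by norm_num, dvd_trans (by norm_num) h30, hg0⟩
  have h5 : 5 ∈ g.primeFactors :=
    Nat.mem_primeFactors.2 ⟨by norm_num, dvd_trans (by norm_num) h30, hg0⟩
  have hset : g.primeFactors.filter (fun q => q ≠ 2) =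
      insert 3 (insert 5 (g.primeFactors.filter (fun q => ¬(q = 2 ∨ q = 3 ∨ q = 5)))) := by
    ext q
    simp only [Finset.mem_filter, Finset.mem_insert]
    constructor
    · rintro ⟨hq, hq2⟩
      by_cases hq3 : q = 3
      · exact Or.inl hq3
      by_cases hq5 : q = 5
      · exact Or.inr (Or.inl hq5)
      exact Or.inr (Or.inr ⟨hq, by tauto⟩)
    · rintro (rfl | rfl | ⟨hq, hq'⟩)
      · exact ⟨h3, by norm_num⟩
      · exact ⟨h5, by norm_num⟩
      · exact ⟨hq, by tauto⟩
  have h3ni : (3 : ℕ) ∉ insert 5 (g.primeFactors.filter (fun q => ¬(q = 2 ∨ q = 3 ∨ q = 5))) := by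
    simp
  have h5ni : (5 : ℕ) ∉ g.primeFactors.filter (fun q => ¬(q = 2 ∨ q = 3 ∨ q = 5)) := by
    simp
  rw [W, hset, Finset.prod_insert h3ni, Finset.prod_insert h5ni, F30]
  norm_num
  ring

lemma W_eq_of_mod_two {g : ℕ} (hg : g % 30 = 2) : W g = F30 g := by
  have h3 : ¬ (3 : ℕ) ∣ g := by omega
  have h5 : ¬ (5 : ℕ) ∣ g := by omega
  have hset : g.primeFactors.filter (fun q => q ≠ 2) =
      g.primeFactors.filter (fun q => ¬(q = 2 ∨ q = 3 ∨ q = 5)) := by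
    ext q
    simp only [Finset.mem_filter]
    constructor
    · rintro ⟨hq, hq2⟩
      refine ⟨hq, ?_⟩
      rintro (rfl | rfl | rfl)
      · exact hq2 rfl
      · exact h3 (Nat.dvd_of_mem_primeFactors hq)
      · exact h5 (Nat.dvd_of_mem_primeFactors hq)
    · rintro ⟨hq, hq'⟩
      exact ⟨hq, by tauto⟩
  rw [W, hset, F30]

lemma squarefree_prod_primes {t : Finset ℕ} (h : ∀ p ∈ t, p.Prime) :
    Squarefree (∏ p ∈ t, p) := by
  classical
  induction t using Finset.induction_on with
  | empty => simpa using squarefree_one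
  | @insert p s hps ih =>
    rw [Finset.prod_insert hps]
    have hp : p.Prime := h p (Finset.mem_insert_self _ _)
    have hs : Squarefree (∏ q ∈ s, q) := ih (fun q hq => h q (Finset.mem_insert_of_mem hq))
    have hcop : Nat.Coprime p (∏ q ∈ s, q) := by
      rw [hp.coprime_iff_not_dvd]
      intro hdvd
      obtain ⟨q, hqs, hpq⟩ := hp.prime.exists_mem_finset_dvd hdvd
      have hq : q.Prime := h q (Finset.mem_insert_of_mem hqs)
      rw [(Nat.prime_dvd_prime_iff_eq hp hq).1 hpq] at hps
      exact hps hqs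
    exact (Nat.squarefree_mul hcop).2 ⟨hp.squarefree, hs⟩

lemma F30_eq_sum (g : ℕ) (hg0 : g ≠ 0) :
    F30 g = ∑ d ∈ g.divisors.filter (fun d => Squarefree d ∧ d.Coprime 30), f30 d := by
  classical
  set S := g.primeFactors.filter (fun q => ¬(q = 2 ∨ q = 3 ∨ q = 5)) with hS
  have hSprime : ∀ q ∈ S, q.Prime := fun q hq =>
    Nat.prime_of_mem_primeFactors (Finset.mem_filter.1 hq).1
  have hS7 : ∀ q ∈ S, 7 ≤ q := by
    intro q hq
    have h := Finset.mem_filter.1 hq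
    exact prime_seven_le (hSprime q hq) (by tauto) (by tauto) (by tauto)
  have step1 : F30 g = ∏ q ∈ S, (((q : ℝ) - 2)⁻¹ + 1) := by
    rw [F30]
    refine Finset.prod_congr rfl (fun q hq => ?_)
    have h7 : (7 : ℝ) ≤ (q : ℝ) := by exact_mod_cast hS7 q hq
    have hne : (q : ℝ) - 2 ≠ 0 := by linarith
    field_simp
    ring
  rw [step1, Finset.prod_add]
  simp only [Finset.prod_const_one, mul_one]
  refine Finset.sum_nbij' (fun t => ∏ q ∈ t, q) (fun d => d.primeFactors) ?_ ?_ ?_ ?_ ?_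
  · intro t ht
    rw [Finset.mem_powerset] at ht
    have htp : ∀ p ∈ t, p.Prime := fun p hp => hSprime p (ht hp)
    have hdvd : (∏ q ∈ t, q) ∣ g := by
      refine Finset.prod_primes_dvd g (fun p hp => (htp p hp).prime) (fun p hp => ?_)
      exact Nat.dvd_of_mem_primeFactors (Finset.mem_filter.1 (ht hp)).1
    have hsf : Squarefree (∏ q ∈ t, q) := squarefree_prod_primes htp
    have hcop : (∏ q ∈ t, q).Coprime 30 := by
      have : ∀ p, p.Prime → p ∣ (∏ q ∈ t, q) → ¬ p ∣ 30 := by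
        intro p hp hpd hp30
        obtain ⟨q, hqt, hpq⟩ := hp.prime.exists_mem_finset_dvd hpd
        have hq : q.Prime := htp q hqt
        rw [(Nat.prime_dvd_prime_iff_eq hp hq).1 hpq] at hp30 hp
        have h7 := hS7 q (ht hqt)
        have : q ≤ 30 := Nat.le_of_dvd (by norm_num) hp30
        interval_cases q <;> revert hp30 hp <;> decide
      rcases Nat.coprime_or_dvd_of_prime Nat.prime_two (∏ q ∈ t, q) with h | h
      · rcases Nat.coprime_or_dvd_of_prime Nat.prime_three (∏ q ∈ t, q) with h3 | h3
        · rcases Nat.coprime_or_dvd_of_prime (by norm_num : Nat.Prime 5) (∏ q ∈ t, q) with h5 | h5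
          · have : (30 : ℕ) = 2 * (3 * 5) := by norm_num
            rw [Nat.coprime_comm, this, Nat.coprime_mul_iff_left, Nat.coprime_mul_iff_left]
            exact ⟨h, h3, h5⟩
          · exact absurd (by norm_num) (this 5 (by norm_num) h5)
        · exact absurd (by norm_num) (this 3 (by norm_num) h3)
      · exact absurd (by norm_num) (this 2 (by norm_num) h)
    simp only [Finset.mem_filter, Nat.mem_divisors]
    exact ⟨⟨hdvd, hg0⟩, hsf, hcop⟩
  · intro d hd
    simp only [Finset.mem_filter, Nat.mem_divisors] at hd
    obtain ⟨⟨hdvd, _⟩, hsf, hcop⟩ := hd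
    rw [Finset.mem_powerset]
    intro q hq
    have hqp : q.Prime := Nat.prime_of_mem_primeFactors hq
    have hqd : q ∣ d := Nat.dvd_of_mem_primeFactors hq
    have hqg : q ∣ g := hqd.trans hdvd
    have hnot : ¬ q ∣ 30 := by
      intro h30
      have h1 : q ∣ 1 := hcop ▸ Nat.dvd_gcd hqd h30
      exact hqp.one_lt.ne' (Nat.dvd_one.mp h1)
    rw [hS, Finset.mem_filter]
    refine ⟨Nat.mem_primeFactors.2 ⟨hqp, hqg, hg0⟩, ?_⟩
    rintro (rfl | rfl | rfl) <;> exact hnot (by norm_num)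
  · intro t ht
    rw [Finset.mem_powerset] at ht
    exact Nat.primeFactors_prod (fun p hp => hSprime p (ht hp))
  · intro d hd
    simp only [Finset.mem_filter, Nat.mem_divisors] at hd
    exact Nat.prod_primeFactors_of_squarefree hd.2.1
  · intro t ht
    rw [Finset.mem_powerset] at ht
    rw [f30, Nat.primeFactors_prod (fun p hp => hSprime p (ht hp))]

lemma sum_F30_eq (r n : ℕ) :
    ∑ g ∈ Agaps r n, F30 g =
      ∑ d ∈ Dset n, f30 d * ((Agaps r n).filter (fun g => d ∣ g)).card := by
  classical
  have h1 : ∀ g ∈ Agaps r n, F30 g = ∑ d ∈ Dset n, if d ∣ g then f30 d else 0 := by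
    intro g hg
    have hg1 : 1 ≤ g ∧ g ≤ n := by
      have := (Finset.mem_filter.1 hg).1
      exact Finset.mem_Icc.1 this
    rw [F30_eq_sum g (by omega)]
    rw [← Finset.sum_filter]
    congr 1
    ext d
    simp only [Finset.mem_filter, Nat.mem_divisors, Dset, Finset.mem_Icc]
    constructor
    · rintro ⟨⟨hdvd, hg0⟩, hsf, hcop⟩
      have hd0 : d ≠ 0 := by rintro rfl; exact hg0 (Nat.eq_zero_of_zero_dvd hdvd)
      exact ⟨⟨⟨Nat.one_le_iff_ne_zero.2 hd0, (Nat.le_of_dvd (by omega) hdvd).trans hg1.2⟩,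
        hsf, hcop⟩, hdvd⟩
    · rintro ⟨⟨_, hsf, hcop⟩, hdvd⟩
      exact ⟨⟨hdvd, by omega⟩, hsf, hcop⟩
  rw [Finset.sum_congr rfl h1, Finset.sum_comm]
  refine Finset.sum_congr rfl (fun d _ => ?_)
  rw [← Finset.sum_filter, Finset.sum_const, nsmul_eq_mul, mul_comm]

lemma count_mod_bounds (n m c : ℕ) (hc : 0 < c) (hcm : c < m) :
    n / m ≤ ((Finset.Icc 1 n).filter (fun g => g % m = c)).card ∧
      ((Finset.Icc 1 n).filter (fun g => g % m = c)).card ≤ n / m + 1 := by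
  classical
  have hm : 0 < m := lt_trans hc hcm
  constructor
  · have := Finset.card_le_card_of_injOn (fun k => m * k + c)
      (s := Finset.range (n / m))
      (t := (Finset.Icc 1 n).filter (fun g => g % m = c)) ?_ ?_
    · simpa using this
    · intro k hk
      rw [Finset.mem_coe, Finset.mem_range] at hk
      have hk1 : m * (k + 1) ≤ m * (n / m) := Nat.mul_le_mul_left m hk
      have hle : m * (n / m) ≤ n := Nat.mul_div_le n m
      simp only [Finset.mem_coe, Finset.mem_filter, Finset.mem_Icc]
      refine ⟨⟨by omega, by nlinarith⟩, ?_⟩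
      simp [Nat.mul_add_mod, Nat.mod_eq_of_lt hcm]
    · intro a _ b _ hab
      simp only at hab
      have : m * a = m * b := by omega
      exact Nat.eq_of_mul_eq_mul_left hm this
  · have := Finset.card_le_card_of_injOn (fun g => g / m)
      (s := (Finset.Icc 1 n).filter (fun g => g % m = c))
      (t := Finset.range (n / m + 1)) ?_ ?_
    · simpa using this
    · intro g hg
      simp only [Finset.mem_coe, Finset.mem_filter, Finset.mem_Icc] at hg
      rw [Finset.mem_coe, Finset.mem_range, Nat.lt_succ_iff]
      exact Nat.div_le_div_right hg.1.2
    · intro a ha b hb hab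
      simp only [Finset.coe_filter, Set.mem_setOf_eq, Finset.mem_Icc] at ha hb
      simp only at hab
      have ha' := Nat.div_add_mod a m
      have hb' := Nat.div_add_mod b m
      rw [ha.2] at ha'
      rw [hb.2] at hb'
      rw [← ha', ← hb', hab]

lemma count_A0 {d : ℕ} (n : ℕ) (hcop : d.Coprime 30) :
    ((Agaps 0 n).filter (fun g => d ∣ g)).card = n / (30 * d) := by
  classical
  have hset : (Agaps 0 n).filter (fun g => d ∣ g) =
      (Finset.Ioc 0 n).filter (fun g => 30 * d ∣ g) := by
    ext g
    simp only [Agaps, Finset.filter_filter, Finset.mem_filter, Finset.mem_Icc, Finset.mem_Ioc]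
    constructor
    · rintro ⟨⟨h1, h2⟩, ⟨heven, hmod⟩, hdvd⟩
      refine ⟨⟨by omega, h2⟩, ?_⟩
      exact (Nat.Coprime.mul_dvd_of_dvd_of_dvd (hcop.symm) (Nat.dvd_of_mod_eq_zero hmod) hdvd)
    · rintro ⟨⟨h1, h2⟩, hdvd⟩
      have h30 : (30 : ℕ) ∣ g := dvd_trans (Dvd.intro d rfl) hdvd
      have hd : d ∣ g := dvd_trans (Dvd.intro_left 30 rfl) hdvd
      have hmod : g % 30 = 0 := by omega
      exact ⟨⟨by omega, h2⟩, ⟨(Nat.even_iff).2 (by omega), hmod⟩, hd⟩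
  rw [hset, ← Nat.Ioc_filter_dvd_card_eq_div]

lemma count_A2 {d : ℕ} (n : ℕ) (hcop : d.Coprime 30) (hd : 0 < d) :
    n / (30 * d) ≤ ((Agaps 2 n).filter (fun g => d ∣ g)).card ∧
      ((Agaps 2 n).filter (fun g => d ∣ g)).card ≤ n / (30 * d) + 1 := by
  classical
  obtain ⟨k, hk2, hkd⟩ := Nat.chineseRemainder (Nat.Coprime.symm hcop) 2 0
  have hm : 0 < 30 * d := by positivity
  set c := k % (30 * d) with hc
  have h30dvd : (30 : ℕ) ∣ 30 * d := Dvd.intro d rfl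
  have hddvd : d ∣ 30 * d := Dvd.intro_left 30 rfl
  have hc30 : c % 30 = 2 := by
    rw [hc, Nat.mod_mod_of_dvd k h30dvd]
    simpa [Nat.ModEq] using hk2
  have hcd : c % d = 0 := by
    rw [hc, Nat.mod_mod_of_dvd k hddvd]
    simpa [Nat.ModEq] using hkd
  have hc0 : 0 < c := by omega
  have hclt : c < 30 * d := Nat.mod_lt _ hm
  have hset : (Agaps 2 n).filter (fun g => d ∣ g) =
      (Finset.Icc 1 n).filter (fun g => g % (30 * d) = c) := by
    ext g
    simp only [Agaps, Finset.filter_filter, Finset.mem_filter, Finset.mem_Icc]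
    constructor
    · rintro ⟨⟨h1, h2⟩, ⟨heven, hmod⟩, hdvd⟩
      refine ⟨⟨h1, h2⟩, ?_⟩
      have hg30 : g ≡ k [MOD 30] := by
        unfold Nat.ModEq
        rw [hmod]
        simpa [Nat.ModEq] using hk2.symm
      have hgd : g ≡ k [MOD d] := by
        unfold Nat.ModEq
        have h0 : g % d = 0 := Nat.mod_eq_zero_of_dvd hdvd
        rw [h0]
        simpa [Nat.ModEq] using hkd.symm
      have := (Nat.modEq_and_modEq_iff_modEq_mul (Nat.Coprime.symm hcop)).1 ⟨hg30, hgd⟩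
      unfold Nat.ModEq at this
      rw [this]
    · rintro ⟨⟨h1, h2⟩, hmod⟩
      have hg30 : g % 30 = 2 := by
        rw [← Nat.mod_mod_of_dvd g h30dvd, hmod, hc30]
      have hgd : d ∣ g := by
        have : g % d = 0 := by rw [← Nat.mod_mod_of_dvd g hddvd, hmod, hcd]
        exact Nat.dvd_of_mod_eq_zero this
      exact ⟨⟨h1, h2⟩, ⟨Nat.even_iff.2 (by omega), hg30⟩, hgd⟩
  rw [hset]
  exact count_mod_bounds n (30 * d) c hc0 hclt

lemma card_A2_lower (n : ℕ) : n / 30 ≤ (Agaps 2 n).card := by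
  classical
  have hset : Agaps 2 n = (Finset.Icc 1 n).filter (fun g => g % 30 = 2) := by
    ext g
    simp only [Agaps, Finset.mem_filter, Finset.mem_Icc]
    constructor
    · rintro ⟨h, _, hm⟩; exact ⟨h, hm⟩
    · rintro ⟨h, hm⟩
      exact ⟨h, Nat.even_iff.2 (by omega), hm⟩
  rw [hset]
  exact (count_mod_bounds n 30 2 (by norm_num) (by norm_num)).1

lemma f30_bounds {d : ℕ} (hsf : Squarefree d) (hcop : d.Coprime 30) (hd : 1 ≤ d) :
    0 ≤ f30 d ∧ f30 d ≤ (Real.sqrt d)⁻¹ := by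
  classical
  have hq7 : ∀ q ∈ d.primeFactors, 7 ≤ q := by
    intro q hq
    have hqp := Nat.prime_of_mem_primeFactors hq
    have hqd := Nat.dvd_of_mem_primeFactors hq
    refine prime_seven_le hqp ?_ ?_ ?_ <;> rintro rfl <;>
      exact hqp.one_lt.ne' (Nat.dvd_one.mp (hcop ▸ Nat.dvd_gcd hqd (by norm_num)))
  set P : ℝ := ∏ q ∈ d.primeFactors, ((q : ℝ) - 2) with hP
  have hPpos : 0 < P := by
    refine Finset.prod_pos (fun q hq => ?_)
    have : (7 : ℝ) ≤ (q : ℝ) := by exact_mod_cast hq7 q hq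
    linarith
  have hdP : (d : ℝ) ≤ P ^ 2 := by
    have hdprod : (d : ℝ) = ∏ q ∈ d.primeFactors, (q : ℝ) := by
      have h := Nat.prod_primeFactors_of_squarefree hsf
      rw [← Nat.cast_prod]
      exact_mod_cast h.symm
    rw [hdprod, hP, ← Finset.prod_pow]
    refine Finset.prod_le_prod (fun q hq => by positivity) (fun q hq => ?_)
    have : (7 : ℝ) ≤ (q : ℝ) := by exact_mod_cast hq7 q hq
    nlinarith
  have hsqrt : Real.sqrt d ≤ P := by
    calc Real.sqrt d ≤ Real.sqrt (P ^ 2) := Real.sqrt_le_sqrt hdP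
    _ = P := Real.sqrt_sq hPpos.le
  have hf : f30 d = P⁻¹ := by rw [f30, hP, ← Finset.prod_inv_distrib]
  constructor
  · rw [hf]
    positivity
  · rw [hf]
    have hd0 : (0 : ℝ) < d := by exact_mod_cast hd
    exact inv_anti₀ (Real.sqrt_pos.2 hd0) hsqrt

lemma sum_inv_sqrt_le (n : ℕ) : ∑ d ∈ Finset.Icc 1 n, (Real.sqrt d)⁻¹ ≤ 2 * Real.sqrt n := by
  induction n with
  | zero => simp
  | succ m ih =>
    rw [Finset.sum_Icc_succ_top (by omega)]
    have hcast : ((m + 1 : ℕ) : ℝ) = (m : ℝ) + 1 := by push_cast; ring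
    set a := Real.sqrt m with ha'
    set b := Real.sqrt ((m : ℝ) + 1) with hb'
    have ha : 0 ≤ a := Real.sqrt_nonneg _
    have hb : 0 < b := Real.sqrt_pos.2 (by positivity)
    have ha2 : a ^ 2 = m := Real.sq_sqrt (by positivity)
    have hb2 : b ^ 2 = (m : ℝ) + 1 := Real.sq_sqrt (by positivity)
    have hkey : b⁻¹ ≤ 2 * b - 2 * a := by
      rw [inv_eq_one_div, div_le_iff₀ hb]
      nlinarith [sq_nonneg (a - b)]
    rw [hcast]
    linarith

lemma one_le_F30 (g : ℕ) : 1 ≤ F30 g := by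
  rw [F30]
  calc (1 : ℝ) = ∏ _q ∈ g.primeFactors.filter (fun q => ¬(q = 2 ∨ q = 3 ∨ q = 5)), (1 : ℝ) :=
        (Finset.prod_const_one).symm
  _ ≤ _ := by
      refine Finset.prod_le_prod (fun q hq => zero_le_one) (fun q hq => ?_)
      obtain ⟨hq1, hq2⟩ := Finset.mem_filter.1 hq
      have hqp := Nat.prime_of_mem_primeFactors hq1
      have h7 : (7 : ℝ) ≤ (q : ℝ) := by
        exact_mod_cast prime_seven_le hqp (by tauto) (by tauto) (by tauto)
      rw [le_div_iff₀ (by linarith)]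
      linarith

lemma V_eq (r : ℕ) (G : ℝ) : V r G = ∑ g ∈ Agaps r ⌊G⌋₊, W g := rfl

/-- In base 30, as `G → ∞`, the ratio `V_0(G)/V_2(G)` tends to `8/3`. -/
theorem base_thirty_team_zero_ratio :
    Tendsto (fun G : ℝ => V 0 G / V 2 G) atTop (nhds (8 / 3)) := by
  classical
  have key : ∀ᶠ G in atTop, |V 0 G / V 2 G - 8 / 3| ≤ 320 * Real.sqrt G / G := by
    filter_upwards [eventually_ge_atTop (60 : ℝ)] with G hG
    set n := ⌊G⌋₊ with hn
    set T0 := ∑ g ∈ Agaps 0 n, F30 g with hT0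
    set T2 := ∑ g ∈ Agaps 2 n, F30 g with hT2
    have hGpos : (0 : ℝ) < G := by linarith
    have hV0 : V 0 G = 8 / 3 * T0 := by
      rw [V_eq, hT0, Finset.mul_sum, ← hn]
      refine Finset.sum_congr rfl (fun g hg => ?_)
      obtain ⟨hg1, hgc⟩ := Finset.mem_filter.1 hg
      have hgi := Finset.mem_Icc.1 hg1
      exact W_eq_of_mod_zero (by omega) hgc.2
    have hV2 : V 2 G = T2 := by
      rw [V_eq, hT2, ← hn]
      refine Finset.sum_congr rfl (fun g hg => ?_)
      obtain ⟨hg1, hgc⟩ := Finset.mem_filter.1 hg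
      exact W_eq_of_mod_two hgc.2
    have hdiff : |T0 - T2| ≤ 2 * Real.sqrt G := by
      rw [hT0, hT2, sum_F30_eq 0 n, sum_F30_eq 2 n, ← Finset.sum_sub_distrib]
      have hterm : ∀ d ∈ Dset n,
          |f30 d * (((Agaps 0 n).filter (fun g => d ∣ g)).card : ℝ) -
            f30 d * (((Agaps 2 n).filter (fun g => d ∣ g)).card : ℝ)| ≤ (Real.sqrt d)⁻¹ := by
        intro d hd
        obtain ⟨hdicc, hsf, hcop⟩ := Finset.mem_filter.1 hd
        have hd1 : 1 ≤ d := (Finset.mem_Icc.1 hdicc).1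
        have hb := f30_bounds hsf hcop hd1
        have hc0 := count_A0 n hcop
        have hc2 := count_A2 n hcop (by omega)
        have habs : |(((Agaps 0 n).filter (fun g => d ∣ g)).card : ℝ) -
            (((Agaps 2 n).filter (fun g => d ∣ g)).card : ℝ)| ≤ 1 := by
          rw [abs_le]
          have h1 : (((Agaps 2 n).filter (fun g => d ∣ g)).card : ℝ) ≤ (n / (30 * d) : ℕ) + 1 := by
            exact_mod_cast hc2.2
          have h2 : ((n / (30 * d) : ℕ) : ℝ) ≤ (((Agaps 2 n).filter (fun g => d ∣ g)).card : ℝ) := by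
            exact_mod_cast hc2.1
          rw [hc0]
          constructor <;> linarith
        calc |f30 d * (((Agaps 0 n).filter (fun g => d ∣ g)).card : ℝ) -
            f30 d * (((Agaps 2 n).filter (fun g => d ∣ g)).card : ℝ)|
            = f30 d * |(((Agaps 0 n).filter (fun g => d ∣ g)).card : ℝ) -
              (((Agaps 2 n).filter (fun g => d ∣ g)).card : ℝ)| := by
              rw [← mul_sub, abs_mul, abs_of_nonneg hb.1]
        _ ≤ f30 d * 1 := by
              exact mul_le_mul_of_nonneg_left habs hb.1
        _ ≤ (Real.sqrt d)⁻¹ := by rw [mul_one]; exact hb.2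
      calc |∑ d ∈ Dset n,
            (f30 d * (((Agaps 0 n).filter (fun g => d ∣ g)).card : ℝ) -
              f30 d * (((Agaps 2 n).filter (fun g => d ∣ g)).card : ℝ))|
          ≤ ∑ d ∈ Dset n,
            |f30 d * (((Agaps 0 n).filter (fun g => d ∣ g)).card : ℝ) -
              f30 d * (((Agaps 2 n).filter (fun g => d ∣ g)).card : ℝ)| :=
            Finset.abs_sum_le_sum_abs _ _
      _ ≤ ∑ d ∈ Dset n, (Real.sqrt d)⁻¹ := Finset.sum_le_sum hterm
      _ ≤ ∑ d ∈ Finset.Icc 1 n, (Real.sqrt d)⁻¹ := by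
            refine Finset.sum_le_sum_of_subset_of_nonneg (Finset.filter_subset _ _)
              (fun d _ _ => by positivity)
      _ ≤ 2 * Real.sqrt n := sum_inv_sqrt_le n
      _ ≤ 2 * Real.sqrt G := by
            have : (n : ℝ) ≤ G := Nat.floor_le hGpos.le
            have := Real.sqrt_le_sqrt this
            linarith
    have hnG : G - 1 < (n : ℝ) := Nat.sub_one_lt_floor G
    have hT2low : G / 60 ≤ T2 := by
      have h1 : ((Agaps 2 n).card : ℝ) ≤ T2 := by
        have h := Finset.card_nsmul_le_sum (Agaps 2 n) F30 1 (fun g _ => one_le_F30 g)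
        simpa using h
      have h2 : ((n / 30 : ℕ) : ℝ) ≤ ((Agaps 2 n).card : ℝ) := by
        exact_mod_cast card_A2_lower n
      have h3 : ((n : ℝ) - 29) / 30 ≤ ((n / 30 : ℕ) : ℝ) := by
        have hmod : 30 * (n / 30) + 29 ≥ n := by omega
        have : ((30 * (n / 30) + 29 : ℕ) : ℝ) ≥ (n : ℝ) := by exact_mod_cast hmod
        push_cast at this
        linarith
      have h4 : G / 60 ≤ ((n : ℝ) - 29) / 30 := by linarith
      linarith
    have hT2pos : 0 < T2 := lt_of_lt_of_le (by linarith) hT2low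
    have heq : V 0 G / V 2 G - 8 / 3 = 8 / 3 * (T0 - T2) / T2 := by
      rw [hV0, hV2]
      field_simp
    rw [heq, abs_div, abs_of_pos hT2pos, abs_mul]
    have h83 : |(8 : ℝ) / 3| = 8 / 3 := by norm_num
    rw [h83]
    calc 8 / 3 * |T0 - T2| / T2 ≤ (8 / 3 * (2 * Real.sqrt G)) / (G / 60) := by
          refine div_le_div₀ (by positivity) ?_ (by linarith) hT2low
          have : (0 : ℝ) ≤ 8 / 3 := by norm_num
          nlinarith [abs_nonneg (T0 - T2)]
    _ = 320 * Real.sqrt G / G := by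
          field_simp
          ring
  have hb0 : Tendsto (fun G : ℝ => 320 * Real.sqrt G / G) atTop (nhds 0) := by
    have h := (tendsto_rpow_neg_atTop (y := 1 / 2) (by norm_num)).const_mul (320 : ℝ)
    rw [mul_zero] at h
    refine Tendsto.congr' ?_ h
    filter_upwards [eventually_gt_atTop (0 : ℝ)] with G hG
    rw [Real.sqrt_eq_rpow, mul_div_assoc]
    congr 1
    rw [eq_div_iff hG.ne', ← Real.rpow_add_one hG.ne']
    norm_num
  have hmain : Tendsto (fun G : ℝ => V 0 G / V 2 G - 8 / 3) atTop (nhds 0) := by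
    refine squeeze_zero_norm' ?_ hb0
    filter_upwards [key] with G hGk
    simpa [Real.norm_eq_abs] using hGk
  have hfinal := hmain.add (tendsto_const_nhds (x := (8 : ℝ) / 3))
  rw [zero_add] at hfinal
  refine hfinal.congr (fun G => ?_)
  ring
end
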